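/- Let A = λ/μ be a skew diagram, and let D be the skew diagram obtained from A by deleting the top box of every column of A. Then there is a bijection between LR tableaux of shape A whose entry in the top box of every column equals 1, and LR tableaux of shape D; the bijection removes all 1's and replaces each entry i ≥ 2 by i − 1. Consequently, if η is any content with c_D(η) ≠ 0 (some LR tableau of D has content η), and j is the number of nonempty columns of A, then c(λ; μ, (j, η_1, η_2, …)) ≠ 0, where (j, η) is the composition prepending j to η (which is a partition since j ≥ η_1). -/

import Mathlib

/-!
A box `(i, j)` of the reduced diagram `(l ∘ (· + 1)) / m` is a pair of boxes `(i, j)`, `(i + 1, j)`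
of `l / m`; moved down by one row, the reduced diagram is therefore the set of boxes of `l / m`
that are not the top box of their column. The inverse map writes `1` in every top box and
`T i j + 1` in the box `(i + 1, j)`. A top box holds the smallest entry of its column and the first
row holds only `1`s, so the semistandard and lattice conditions of the two tableaux correspond
after the shift by one row. The only new condition, the lattice condition between `1` and `2`,
holds because every `2` lies directly below a `1`, and the `1`s are the top boxes, one per
nonempty column.
-/

/-- `f : ℕ → ℕ` represents a partition (0-indexed parts): weakly decreasing
and eventually zero. -/
def IsPartition (f : ℕ → ℕ) : Prop :=
  (∀ ⦃i j : ℕ⦄, i ≤ j → f j ≤ f i) ∧ ∃ N, ∀ i, N ≤ i → f i = 0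

/-- The box `(i, j)` (row `i`, column `j`, both 0-indexed) lies in the skew
diagram `l / m`. -/
def InSkew (l m : ℕ → ℕ) (p : ℕ × ℕ) : Prop :=
  m p.1 ≤ p.2 ∧ p.2 < l p.1

/-- `T` is a Littlewood–Richardson tableau of skew shape `l / m` and content `n`:
entries are positive exactly on the shape, rows weakly increase, columns strictly
increase, the number of entries equal to `k + 1` is `n k`, and every prefix of the
reverse reading word (right to left, top to bottom) is a lattice word. -/
structure IsLR (l m n : ℕ → ℕ) (T : ℕ → ℕ → ℕ) : Prop where
  support : ∀ p : ℕ × ℕ, T p.1 p.2 ≠ 0 ↔ InSkew l m p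
  row_weak : ∀ i j, InSkew l m (i, j) → InSkew l m (i, j + 1) → T i j ≤ T i (j + 1)
  col_strict : ∀ i j, InSkew l m (i, j) → InSkew l m (i + 1, j) → T i j < T (i + 1) j
  content : ∀ k : ℕ, Nat.card {p : ℕ × ℕ // T p.1 p.2 = k + 1} = n k
  lattice : ∀ i j k : ℕ,
    Nat.card {p : ℕ × ℕ // T p.1 p.2 = k + 2 ∧ (p.1 < i ∨ (p.1 = i ∧ j ≤ p.2))} ≤
      Nat.card {p : ℕ × ℕ // T p.1 p.2 = k + 1 ∧ (p.1 < i ∨ (p.1 = i ∧ j ≤ p.2))}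

/-- The Littlewood–Richardson coefficient `c(l; m, n)`: the number of LR tableaux
of shape `l / m` and content `n`. -/
noncomputable def LR (l m n : ℕ → ℕ) : ℕ :=
  Nat.card {T : ℕ → ℕ → ℕ // IsLR l m n T}

/-- The partition `a` is contained in the skew diagram `l / m`: some translate
of `a`, or of `a` rotated by 180°, is a subset of the diagram. -/
def ContainedIn (a l m : ℕ → ℕ) : Prop :=
  (∃ r c, ∀ i j, j < a i → InSkew l m (r + i, c + j)) ∨
  (∃ r c, ∀ i j, j < a i → i ≤ r ∧ j ≤ c ∧ InSkew l m (r - i, c - j))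

/-- The complement of `f` in the rectangle with `L` rows of length `k`,
rotated by 180°, regarded as a partition. -/
def RotCompl (k L : ℕ) (f : ℕ → ℕ) : ℕ → ℕ :=
  fun i => if i < L then k - f (L - 1 - i) else 0

/-- `(i, j)` is the top box of column `j` of the skew diagram `l / m`. -/
def IsTopBox (l m : ℕ → ℕ) (i j : ℕ) : Prop :=
  InSkew l m (i, j) ∧ ∀ i' < i, ¬ InSkew l m (i', j)

instance (l m : ℕ → ℕ) : DecidablePred (InSkew l m) := fun p =>
  inferInstanceAs (Decidable (m p.1 ≤ p.2 ∧ p.2 < l p.1))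

section Shape

variable {l m : ℕ → ℕ} {i j : ℕ}

theorem InSkew.of_le_of_le (hl : Antitone l) (hm : Antitone m) {i₁ i₂ : ℕ}
    (h₁ : InSkew l m (i₁, j)) (h₂ : InSkew l m (i₂, j)) (hi₁ : i₁ ≤ i) (hi₂ : i ≤ i₂) :
    InSkew l m (i, j) :=
  ⟨(hm hi₁).trans h₁.1, h₂.2.trans_le (hl hi₂)⟩

theorem inSkew_succ_iff (hl : Antitone l) (hm : Antitone m) :
    InSkew (fun i => l (i + 1)) m (i, j) ↔ InSkew l m (i, j) ∧ InSkew l m (i + 1, j) :=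
  ⟨fun h => ⟨⟨h.1, h.2.trans_le (hl i.le_succ)⟩, ⟨(hm i.le_succ).trans h.1, h.2⟩⟩,
    fun h => ⟨h.1.1, h.2.2⟩⟩

theorem isTopBox_zero_iff : IsTopBox l m 0 j ↔ InSkew l m (0, j) :=
  ⟨And.left, fun h => ⟨h, fun _ hi => absurd hi (Nat.not_lt_zero _)⟩⟩

theorem isTopBox_succ_iff (hl : Antitone l) (hm : Antitone m) :
    IsTopBox l m (i + 1) j ↔ InSkew l m (i + 1, j) ∧ ¬ InSkew l m (i, j) :=
  ⟨fun h => ⟨h.1, h.2 i i.lt_succ_self⟩, fun ⟨h, hi⟩ =>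
    ⟨h, fun _ hi' h' => hi (h'.of_le_of_le hl hm h (Nat.le_of_lt_succ hi') i.le_succ)⟩⟩

theorem IsTopBox.unique {i' : ℕ} (h : IsTopBox l m i j) (h' : IsTopBox l m i' j) : i = i' :=
  le_antisymm (not_lt.1 fun hi => h.2 i' hi h'.1) (not_lt.1 fun hi => h'.2 i hi h.1)

theorem card_isTopBox :
    Nat.card {p : ℕ × ℕ // IsTopBox l m p.1 p.2} = Nat.card {j : ℕ // ∃ i, InSkew l m (i, j)} := by
  refine Nat.card_congr (Equiv.ofBijective (fun p => ⟨p.1.2, p.1.1, p.2.1⟩) ⟨?_, ?_⟩)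
  · rintro ⟨⟨i, j⟩, h⟩ ⟨⟨i', j'⟩, h'⟩ hj
    obtain rfl : j = j' := congrArg Subtype.val hj
    obtain rfl := h.unique h'
    rfl
  · rintro ⟨j, hj⟩
    exact ⟨⟨(Nat.find hj, j), Nat.find_spec hj, fun _ => Nat.find_min hj⟩, rfl⟩

theorem IsPartition.exists_bound_of_inSkew (hl : IsPartition l) :
    ∃ R, ∀ p, InSkew l m p → p.1 < R ∧ p.2 < l 0 := by
  obtain ⟨R, hR⟩ := hl.2
  refine ⟨R, fun p hp => ⟨not_le.1 fun h => ?_, hp.2.trans_le (hl.1 (Nat.zero_le _))⟩⟩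
  have := hp.2
  rw [hR p.1 h] at this
  exact Nat.not_lt_zero _ this

theorem IsPartition.finite_setOf_inSkew (hl : IsPartition l) : {p | InSkew l m p}.Finite :=
  let ⟨R, hR⟩ := hl.exists_bound_of_inSkew (m := m)
  ((Set.finite_Iio R).prod (Set.finite_Iio (l 0))).subset fun p hp => hR p hp

end Shape

theorem card_subtype_succ_fst {P Q : ℕ × ℕ → Prop} (hPQ : ∀ i j, P (i, j) ↔ Q (i + 1, j))
    (hQ : ∀ j, ¬ Q (0, j)) : Nat.card {p // P p} = Nat.card {p // Q p} := by
  refine Nat.card_congr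
    (Equiv.ofBijective (fun p => ⟨(p.1.1 + 1, p.1.2), (hPQ _ _).1 p.2⟩) ⟨?_, ?_⟩)
  · rintro ⟨⟨a, b⟩, _⟩ ⟨⟨c, d⟩, _⟩ h
    simp only [Subtype.mk.injEq, Prod.mk.injEq, Nat.add_right_cancel_iff] at h
    obtain ⟨rfl, rfl⟩ := h
    rfl
  · rintro ⟨⟨_ | a, b⟩, hq⟩
    · exact absurd hq (hQ b)
    · exact ⟨⟨(a, b), (hPQ a b).2 hq⟩, rfl⟩

namespace IsLR

variable {l m n : ℕ → ℕ} {T : ℕ → ℕ → ℕ} {i j : ℕ}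

theorem eq_zero_iff (hT : IsLR l m n T) : T i j = 0 ↔ ¬ InSkew l m (i, j) :=
  (not_iff_comm.1 (hT.support (i, j))).symm

theorem eq_zero (hT : IsLR l m n T) (h : ¬ InSkew l m (i, j)) : T i j = 0 :=
  hT.eq_zero_iff.2 h

theorem pos (hT : IsLR l m n T) (h : InSkew l m (i, j)) : 0 < T i j :=
  Nat.pos_of_ne_zero ((hT.support (i, j)).2 h)

theorem lt_of_inSkew_succ (hT : IsLR l m n T) (h : InSkew l m (i + 1, j)) :
    T i j < T (i + 1) j := by
  by_cases h' : InSkew l m (i, j)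
  · exact hT.col_strict i j h' h
  · rw [hT.eq_zero h']
    exact hT.pos h

theorem le_of_content_eq_zero (hl : IsPartition l) (hT : IsLR l m n T) {N : ℕ}
    (hN : ∀ k, N ≤ k → n k = 0) (i j : ℕ) : T i j ≤ N := by
  by_contra! h
  obtain ⟨k, hk⟩ : ∃ k, T i j = k + 1 := ⟨T i j - 1, by omega⟩
  have : Finite {p : ℕ × ℕ // T p.1 p.2 = k + 1} :=
    (hl.finite_setOf_inSkew.subset fun p hp => (hT.support p).1 (by
      have : T p.1 p.2 = k + 1 := hp
      omega)).to_subtype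
  have hcard := hT.content k
  rw [hN k (by omega), Nat.card_eq_zero] at hcard
  exact hcard.elim (fun h => h.false ⟨(i, j), hk⟩) fun h => h.not_finite this

end IsLR

theorem finite_isLR {l m n : ℕ → ℕ} (hl : IsPartition l) (hn : ∃ N, ∀ k, N ≤ k → n k = 0) :
    Finite {T : ℕ → ℕ → ℕ // IsLR l m n T} := by
  obtain ⟨N, hN⟩ := hn
  obtain ⟨R, hR⟩ := hl.exists_bound_of_inSkew (m := m)
  refine Finite.of_injective (β := Fin R × Fin (l 0) → Fin (N + 1))
    (fun T q => ⟨T.1 q.1 q.2, Nat.lt_succ_of_le (T.2.le_of_content_eq_zero hl hN _ _)⟩) ?_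
  rintro ⟨T, hT⟩ ⟨T', hT'⟩ h
  ext i j
  by_cases hij : InSkew l m (i, j)
  · have hb := hR _ hij
    exact congrArg Fin.val (congrFun h (⟨i, hb.1⟩, ⟨j, hb.2⟩))
  · show T i j = T' i j
    rw [hT.eq_zero hij, hT'.eq_zero hij]

def eraseOnes (T : ℕ → ℕ → ℕ) : ℕ → ℕ → ℕ := fun i j => T (i + 1) j - 1

def insertOnes (l m : ℕ → ℕ) (T : ℕ → ℕ → ℕ) : ℕ → ℕ → ℕ
  | 0, j => if InSkew l m (0, j) then 1 else 0
  | i + 1, j => if InSkew l m (i + 1, j) then T i j + 1 else 0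

section EraseOnes

variable {T : ℕ → ℕ → ℕ}

theorem card_eraseOnes_eq (h0 : ∀ j, T 0 j ≤ 1) (k : ℕ) :
    Nat.card {p : ℕ × ℕ // eraseOnes T p.1 p.2 = k + 1} =
      Nat.card {p : ℕ × ℕ // T p.1 p.2 = k + 2} :=
  card_subtype_succ_fst (fun i j => by simp only [eraseOnes]; omega)
    (fun j => by dsimp only; have := h0 j; omega)

theorem card_eraseOnes_prefix_eq (h0 : ∀ j, T 0 j ≤ 1) (i j k : ℕ) :
    Nat.card {p : ℕ × ℕ // eraseOnes T p.1 p.2 = k + 1 ∧ (p.1 < i ∨ (p.1 = i ∧ j ≤ p.2))} =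
      Nat.card {p : ℕ × ℕ //
        T p.1 p.2 = k + 2 ∧ (p.1 < i + 1 ∨ (p.1 = i + 1 ∧ j ≤ p.2))} :=
  card_subtype_succ_fst (fun a b => by simp only [eraseOnes]; omega)
    (fun b => by dsimp only; have := h0 b; omega)

variable {l m : ℕ → ℕ} {J : ℕ} {η : ℕ → ℕ}

theorem IsLR.eraseOnes (hl : Antitone l) (hm : Antitone m)
    (hT : IsLR l m (fun i => if i = 0 then J else η (i - 1)) T)
    (htop : ∀ i j, IsTopBox l m i j → T i j = 1) :
    IsLR (fun i => l (i + 1)) m η (eraseOnes T) := by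
  have h0 (j : ℕ) : T 0 j ≤ 1 := by
    by_cases h : InSkew l m (0, j)
    · exact (htop 0 j (isTopBox_zero_iff.2 h)).le
    · exact (hT.eq_zero h).trans_le zero_le_one
  refine ⟨fun ⟨i, j⟩ => ?_, fun i j h₁ h₂ => ?_, fun i j h₁ h₂ => ?_, fun k => ?_,
    fun i j k => ?_⟩
  · show T (i + 1) j - 1 ≠ 0 ↔ _
    rw [inSkew_succ_iff hl hm]
    constructor
    · intro h
      have hA : InSkew l m (i + 1, j) := (hT.support (i + 1, j)).1 (by dsimp only; omega)
      refine ⟨not_not.1 fun hi => ?_, hA⟩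
      have := htop _ _ ((isTopBox_succ_iff hl hm).2 ⟨hA, hi⟩)
      omega
    · rintro ⟨h, h'⟩
      have := hT.col_strict i j h h'
      have := hT.pos h
      omega
  · rw [inSkew_succ_iff hl hm] at h₁ h₂
    exact Nat.sub_le_sub_right (hT.row_weak _ _ h₁.2 h₂.2) 1
  · rw [inSkew_succ_iff hl hm] at h₁ h₂
    have := hT.col_strict _ _ h₁.2 h₂.2
    have := hT.pos h₁.2
    show T (i + 1) j - 1 < T (i + 1 + 1) j - 1
    omega
  · exact (card_eraseOnes_eq h0 k).trans (hT.content (k + 1))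
  · exact (card_eraseOnes_prefix_eq h0 i j (k + 1)).trans_le
      ((hT.lattice (i + 1) j (k + 1)).trans_eq (card_eraseOnes_prefix_eq h0 i j k).symm)

end EraseOnes

section InsertOnes

variable {l m η : ℕ → ℕ} {T : ℕ → ℕ → ℕ} {i j : ℕ}

theorem insertOnes_zero_le_one : insertOnes l m T 0 j ≤ 1 := by
  simp only [insertOnes]
  split_ifs <;> omega

theorem insertOnes_ne_zero_iff : insertOnes l m T i j ≠ 0 ↔ InSkew l m (i, j) := by
  cases i <;> simp only [insertOnes] <;> split_ifs <;> simp_all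

theorem eraseOnes_insertOnes (hm : Antitone m)
    (hT : IsLR (fun i => l (i + 1)) m η T) : eraseOnes (insertOnes l m T) = T := by
  funext i j
  simp only [eraseOnes, insertOnes]
  split_ifs with h
  · rfl
  · exact (hT.eq_zero fun h' => h ⟨(hm i.le_succ).trans h'.1, h'.2⟩).symm

theorem insertOnes_eraseOnes {n : ℕ → ℕ} (hT : IsLR l m n T)
    (htop : ∀ i j, IsTopBox l m i j → T i j = 1) : insertOnes l m (eraseOnes T) = T := by
  funext i j
  cases i <;> simp only [insertOnes, eraseOnes] <;> split_ifs with h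
  · exact (htop 0 j (isTopBox_zero_iff.2 h)).symm
  · exact (hT.eq_zero h).symm
  · have := hT.pos h
    omega
  · exact (hT.eq_zero h).symm

theorem insertOnes_eq_one_iff (hl : Antitone l) (hm : Antitone m)
    (hT : IsLR (fun i => l (i + 1)) m η T) : insertOnes l m T i j = 1 ↔ IsTopBox l m i j := by
  cases i with
  | zero =>
    simp only [insertOnes, isTopBox_zero_iff]
    split_ifs with h
    · exact iff_of_true rfl h
    · exact iff_of_false not_false h
  | succ i =>
    simp only [insertOnes, isTopBox_succ_iff hl hm]
    split_ifs with h
    · rw [add_eq_right, hT.eq_zero_iff, inSkew_succ_iff hl hm, and_iff_left h, and_iff_right h]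
    · exact iff_of_false not_false fun h' => h h'.1

theorem insertOnes_eq_one_of_succ_eq_two (hl : Antitone l)
    (hT : IsLR (fun i => l (i + 1)) m η T) (h : insertOnes l m T (i + 1) j = 2) :
    insertOnes l m T i j = 1 := by
  simp only [insertOnes] at h
  split_ifs at h
  have hD : InSkew (fun i => l (i + 1)) m (i, j) := (hT.support (i, j)).1 (by dsimp only; omega)
  have hA : InSkew l m (i, j) := ⟨hD.1, hD.2.trans_le (hl i.le_succ)⟩
  cases i with
  | zero => simp only [insertOnes, if_pos hA]
  | succ i =>
    have := hT.lt_of_inSkew_succ hD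
    simp only [insertOnes, if_pos hA]
    omega

theorem insertOnes_row_weak (hT : IsLR (fun i => l (i + 1)) m η T)
    (h₁ : InSkew l m (i, j)) (h₂ : InSkew l m (i, j + 1)) :
    insertOnes l m T i j ≤ insertOnes l m T i (j + 1) := by
  cases i with
  | zero => simp only [insertOnes, if_pos h₁, if_pos h₂, le_refl]
  | succ i =>
    simp only [insertOnes, if_pos h₁, if_pos h₂, Nat.add_le_add_iff_right]
    by_cases hD : InSkew (fun i => l (i + 1)) m (i, j)
    · exact hT.row_weak i j hD ⟨hD.1.trans j.le_succ, h₂.2⟩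
    · exact (hT.eq_zero hD).trans_le (Nat.zero_le _)

theorem insertOnes_col_strict (hT : IsLR (fun i => l (i + 1)) m η T)
    (h₁ : InSkew l m (i, j)) (h₂ : InSkew l m (i + 1, j)) :
    insertOnes l m T i j < insertOnes l m T (i + 1) j := by
  have hD : InSkew (fun i => l (i + 1)) m (i, j) := ⟨h₁.1, h₂.2⟩
  cases i with
  | zero =>
    simp only [insertOnes, if_pos h₁, if_pos h₂, Nat.lt_add_left_iff_pos]
    exact hT.pos hD
  | succ i =>
    simp only [insertOnes, if_pos h₁, if_pos h₂, Nat.add_lt_add_iff_right]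
    exact hT.lt_of_inSkew_succ hD

theorem insertOnes_content (hl : Antitone l) (hm : Antitone m) {J : ℕ}
    (hJ : J = Nat.card {j : ℕ // ∃ i, InSkew l m (i, j)})
    (hT : IsLR (fun i => l (i + 1)) m η T) (k : ℕ) :
    Nat.card {p : ℕ × ℕ // insertOnes l m T p.1 p.2 = k + 1} =
      if k = 0 then J else η (k - 1) := by
  cases k with
  | zero =>
    rw [if_pos rfl, hJ, ← card_isTopBox]
    exact Nat.card_congr (Equiv.subtypeEquivRight fun _ => insertOnes_eq_one_iff hl hm hT)
  | succ k =>
    rw [if_neg k.succ_ne_zero, Nat.add_sub_cancel,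
      ← card_eraseOnes_eq (fun _ => insertOnes_zero_le_one), eraseOnes_insertOnes hm hT]
    exact hT.content k

theorem insertOnes_lattice (hl : IsPartition l) (hm : Antitone m)
    (hT : IsLR (fun i => l (i + 1)) m η T) (i j k : ℕ) :
    Nat.card {p : ℕ × ℕ //
        insertOnes l m T p.1 p.2 = k + 2 ∧ (p.1 < i ∨ (p.1 = i ∧ j ≤ p.2))} ≤
      Nat.card {p : ℕ × ℕ //
        insertOnes l m T p.1 p.2 = k + 1 ∧ (p.1 < i ∨ (p.1 = i ∧ j ≤ p.2))} := by
  have h0 (j : ℕ) := insertOnes_zero_le_one (l := l) (m := m) (T := T) (j := j)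
  cases k with
  | zero =>
    refine (card_subtype_succ_fst (P := fun p => insertOnes l m T (p.1 + 1) p.2 = 2 ∧
      (p.1 + 1 < i ∨ (p.1 + 1 = i ∧ j ≤ p.2))) (fun _ _ => Iff.rfl)
        fun b => by dsimp only; have := h0 b; omega).symm.trans_le ?_
    refine Nat.card_mono (hl.finite_setOf_inSkew.subset fun p hp =>
      insertOnes_ne_zero_iff.1 (ne_of_eq_of_ne hp.1 one_ne_zero))
      fun p ⟨h2, hpre⟩ => ⟨insertOnes_eq_one_of_succ_eq_two hl.1 hT h2, by omega⟩
  | succ k =>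
    cases i with
    | zero =>
      refine (Nat.card_eq_zero.2 (.inl ⟨fun ⟨⟨a, b⟩, hv, hpre⟩ => ?_⟩)).trans_le (Nat.zero_le _)
      dsimp only at hv hpre
      obtain rfl : a = 0 := by omega
      have := h0 b
      omega
    | succ i =>
      rw [← card_eraseOnes_prefix_eq h0, ← card_eraseOnes_prefix_eq h0,
        eraseOnes_insertOnes hm hT]
      exact hT.lattice i j k

theorem IsLR.insertOnes (hl : IsPartition l) (hm : Antitone m) {J : ℕ}
    (hJ : J = Nat.card {j : ℕ // ∃ i, InSkew l m (i, j)})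
    (hT : IsLR (fun i => l (i + 1)) m η T) :
    IsLR l m (fun i => if i = 0 then J else η (i - 1)) (insertOnes l m T) :=
  ⟨fun _ => insertOnes_ne_zero_iff, fun _ _ => insertOnes_row_weak hT,
    fun _ _ => insertOnes_col_strict hT, insertOnes_content hl.1 hm hJ hT,
    insertOnes_lattice hl hm hT⟩

end InsertOnes

theorem stmt3_general (l m : ℕ → ℕ) (hl : IsPartition l) (hm : IsPartition m)
    (J : ℕ) (hJ : J = Nat.card {j : ℕ // ∃ i, InSkew l m (i, j)}) :
    (∀ η : ℕ → ℕ, IsPartition η →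
      Set.BijOn (fun (T : ℕ → ℕ → ℕ) => fun i j => T (i + 1) j - 1)
        {T | IsLR l m (fun i => if i = 0 then J else η (i - 1)) T ∧
             ∀ i j, IsTopBox l m i j → T i j = 1}
        {T | IsLR (fun i => l (i + 1)) m η T}) ∧
    (∀ η : ℕ → ℕ, IsPartition η → LR (fun i => l (i + 1)) m η ≠ 0 →
      LR l m (fun i => if i = 0 then J else η (i - 1)) ≠ 0) := by
  refine ⟨fun η _ => ?_, fun η hη hne => ?_⟩
  · exact Set.InvOn.bijOn (f' := insertOnes l m)
      ⟨fun T hT => insertOnes_eraseOnes hT.1 hT.2, fun T hT => eraseOnes_insertOnes hm.1 hT⟩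
      (fun T hT => hT.1.eraseOnes hl.1 hm.1 hT.2)
      fun T hT => ⟨hT.insertOnes hl hm.1 hJ, fun _ _ => (insertOnes_eq_one_iff hl.1 hm.1 hT).2⟩
  · obtain ⟨⟨T, hT⟩⟩ := (Nat.card_ne_zero.1 hne).1
    obtain ⟨N, hN⟩ := hη.2
    have hfin : Finite {T // IsLR l m (fun i => if i = 0 then J else η (i - 1)) T} :=
      finite_isLR hl ⟨N + 1, fun k hk => by rw [if_neg (by omega)]; exact hN _ (by omega)⟩
    exact Nat.card_ne_zero.2 ⟨⟨⟨_, hT.insertOnes hl hm.1 hJ⟩⟩, hfin⟩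

/-- Removing the top box of every column of `l / m` yields (a translate of) the
skew diagram `(l ∘ (·+1)) / m`.  The map removing all `1`s and replacing each
entry `i ≥ 2` by `i - 1` is a bijection between LR tableaux of shape `l / m`
with entry `1` in the top box of every column (and content `(J, η)` where `J`
is the number of nonempty columns) and LR tableaux of the reduced shape with
content `η`.  Consequently, if some LR tableau of the reduced shape has content
`η`, then `c(l; m, (J, η)) ≠ 0`. -/
theorem stmt3 (l m : ℕ → ℕ) (hl : IsPartition l) (hm : IsPartition m)
    (hml : ∀ i, m i ≤ l i)
    (J : ℕ) (hJ : J = Nat.card {j : ℕ // ∃ i, InSkew l m (i, j)}) :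
    (∀ η : ℕ → ℕ, IsPartition η →
      Set.BijOn (fun (T : ℕ → ℕ → ℕ) => fun i j => T (i + 1) j - 1)
        {T | IsLR l m (fun i => if i = 0 then J else η (i - 1)) T ∧
             ∀ i j, IsTopBox l m i j → T i j = 1}
        {T | IsLR (fun i => l (i + 1)) m η T}) ∧
    (∀ η : ℕ → ℕ, IsPartition η → LR (fun i => l (i + 1)) m η ≠ 0 →
      LR l m (fun i => if i = 0 then J else η (i - 1)) ≠ 0) :=
  stmt3_general l m hl hm J hJ
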